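/- arXiv:1006.4804 — 5 statements merged into one kernel-verified Lean document; each statement's English description precedes it below -/
import Mathlib

section
/- Let n ≥ 1 and let X : ℝ → Matrix (Fin n) (Fin n) ℝ be continuous on [0, b] with all entries bounded by M > 0 on [0, b]. Define E_0(x) = 1 and E_{k+1}(x) = ∫_0^x X(t) · E_k(t) dt. Then for every x ∈ [0, b] the series ∑_{k=0}^∞ E_k(x) converges (is summable) in the space of n × n real matrices; i.e. the integral series ℰ(X)(x) is well-defined. -/
/-!
If `‖X‖ ≤ C` on `[0, b]` (compactness), then by induction `‖E_k(x)‖ ≤ (n C x)^k / k!`, the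
factor `n` coming from the sup norm being submultiplicative only up to the dimension. The series
is thus dominated by the exponential series of `n C x`.
-/

open MeasureTheory Matrix

/- Matrices are equipped with the elementwise sup norm. -/
attribute [local instance] Matrix.normedAddCommGroup Matrix.normedSpace

/-- Terms of the left integral series: `E_0(x) = 1`, `E_{k+1}(x) = ∫_0^x X(t) * E_k(t) dt`. -/
noncomputable def lterm {ι : Type*} [Fintype ι] [DecidableEq ι]
    (X : ℝ → Matrix ι ι ℝ) : ℕ → ℝ → Matrix ι ι ℝ
  | 0, _ => 1
  | k + 1, x => ∫ t in (0:ℝ)..x, X t * lterm X k t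

/-- The left integral series `ℰ(X)(x) = ∑_{k=0}^∞ E_k(x)`. -/
noncomputable def ES {ι : Type*} [Fintype ι] [DecidableEq ι]
    (X : ℝ → Matrix ι ι ℝ) (x : ℝ) : Matrix ι ι ℝ := ∑' k, lterm X k x

/-- Terms of the right integral series: `F_0(x) = 1`, `F_{k+1}(x) = ∫_0^x F_k(t) * X(t) dt`. -/
noncomputable def rterm {ι : Type*} [Fintype ι] [DecidableEq ι]
    (X : ℝ → Matrix ι ι ℝ) : ℕ → ℝ → Matrix ι ι ℝ
  | 0, _ => 1
  | k + 1, x => ∫ t in (0:ℝ)..x, rterm X k t * X t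

/-- The right integral series `ℱ(X)(x) = ∑_{k=0}^∞ F_k(x)`. -/
noncomputable def FS {ι : Type*} [Fintype ι] [DecidableEq ι]
    (X : ℝ → Matrix ι ι ℝ) (x : ℝ) : Matrix ι ι ℝ := ∑' k, rterm X k x

namespace Matrix

variable {ι α : Type*} [Fintype ι]

theorem norm_one_le [DecidableEq ι] [NormedRing α] [NormOneClass α] :
    ‖(1 : Matrix ι ι α)‖ ≤ 1 := by
  refine (norm_le_iff zero_le_one).2 fun i j => ?_
  rw [one_apply]
  split_ifs <;> simp

theorem norm_mul_le_card_mul [NormedRing α] (A B : Matrix ι ι α) :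
    ‖A * B‖ ≤ Fintype.card ι * ‖A‖ * ‖B‖ := by
  refine (norm_le_iff (by positivity)).2 fun i j => ?_
  calc ‖(A * B) i j‖ ≤ ∑ l, ‖A i l‖ * ‖B l j‖ :=
        (norm_sum_le _ _).trans (Finset.sum_le_sum fun l _ => norm_mul_le _ _)
    _ ≤ ∑ _l : ι, ‖A‖ * ‖B‖ := by
        gcongr <;> exact norm_entry_le_entrywise_sup_norm _
    _ = Fintype.card ι * ‖A‖ * ‖B‖ := by simp [mul_assoc]

end Matrix

theorem integral_mul_pow_div_factorial (a s : ℝ) (k : ℕ) :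
    ∫ t in (0:ℝ)..s, a * ((a * t) ^ k / k.factorial) =
      (a * s) ^ (k + 1) / (k + 1).factorial := by
  simp_rw [mul_pow, div_eq_mul_inv]
  rw [intervalIntegral.integral_const_mul, intervalIntegral.integral_mul_const,
    intervalIntegral.integral_const_mul, integral_pow, Nat.factorial_succ]
  push_cast
  field_simp
  ring

-- No integrability is needed: a non-integrable integrand has integral `0`.
theorem norm_lterm_le {ι : Type*} [Fintype ι] [DecidableEq ι] {X : ℝ → Matrix ι ι ℝ}
    {b C : ℝ} (hC : ∀ t ∈ Set.Icc 0 b, ‖X t‖ ≤ C) (k : ℕ) :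
    ∀ s ∈ Set.Icc 0 b, ‖lterm X k s‖ ≤ (Fintype.card ι * C * s) ^ k / k.factorial := by
  induction k with
  | zero => exact fun s _ => by simpa [lterm] using Matrix.norm_one_le
  | succ k ih =>
    intro s ⟨hs0, hsb⟩
    have hC0 : 0 ≤ C := (norm_nonneg _).trans (hC s ⟨hs0, hsb⟩)
    rw [← integral_mul_pow_div_factorial]
    refine intervalIntegral.norm_integral_le_of_norm_le hs0 (.of_forall fun t ⟨ht0, hts⟩ => ?_)
      (Continuous.intervalIntegrable (by fun_prop) _ _)
    have ht : t ∈ Set.Icc 0 b := ⟨ht0.le, hts.trans hsb⟩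
    calc ‖X t * lterm X k t‖ ≤ Fintype.card ι * ‖X t‖ * ‖lterm X k t‖ :=
          norm_mul_le_card_mul _ _
      _ ≤ Fintype.card ι * C * ((Fintype.card ι * C * t) ^ k / k.factorial) := by
        gcongr
        exacts [hC t ht, ih t ht]

theorem ES_summable_general {n : ℕ} (b : ℝ)
    (X : ℝ → Matrix (Fin n) (Fin n) ℝ)
    (hX : ContinuousOn X (Set.Icc 0 b)) :
    ∀ x ∈ Set.Icc (0:ℝ) b, Summable (fun k => lterm X k x) := by
  obtain ⟨C, hC⟩ := isCompact_Icc.exists_bound_of_continuousOn hX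
  intro x hx
  exact .of_norm_bounded (Real.summable_pow_div_factorial (Fintype.card (Fin n) * C * x))
    fun k => norm_lterm_le hC k x hx

/-- the left integral series `ℰ(X)(x)` converges (is summable). -/
theorem ES_summable {n : ℕ} (hn : 1 ≤ n) (b M : ℝ) (hM : 0 < M)
    (X : ℝ → Matrix (Fin n) (Fin n) ℝ)
    (hX : ContinuousOn X (Set.Icc 0 b))
    (hbound : ∀ t ∈ Set.Icc (0:ℝ) b, ∀ i j, |X t i j| ≤ M) :
    ∀ x ∈ Set.Icc (0:ℝ) b, Summable (fun k => lterm X k x) :=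
  ES_summable_general b X hX
end

section
/- Let X : ℝ → Matrix (Fin n) (Fin n) ℝ be continuous on [0, b], and suppose that for every x ∈ [0, b] the matrices X(x) and ∫_0^x X(t) dt commute. Then for every x ∈ [0, b], ℰ(X)(x) = exp(∫_0^x X(t) dt) = ℱ(X)(x), where exp denotes the matrix exponential. -/
open MeasureTheory Matrix

/- Matrices are equipped with the elementwise sup norm. -/
attribute [local instance] Matrix.normedAddCommGroup Matrix.normedSpace

/-!
Write `A(x) = ∫_0^x X`. Wherever `X(t)` commutes with `A(t)`, the product rule gives
`(A^(k+1))' = (k+1) X A^k = (k+1) A^k X`, so by induction both `E_k(x)` and `F_k(x)` equal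
`A(x)^k / k!`, and the two series are the exponential series of `A(x)`. Since `X` is only
continuous on `[0, b]`, it is first extended continuously to `ℝ`; this does not change
`E_k(x)` or `F_k(x)` for `x ∈ [0, b]`, which only see `X` on `[0, x]`.
-/

open Set
open scoped Nat

theorem ContinuousOn.exists_continuous_eqOn_Icc {α β : Type*} [LinearOrder α]
    [TopologicalSpace α] [OrderTopology α] [TopologicalSpace β] {f : α → β} {a b : α}
    (hf : ContinuousOn f (Icc a b)) (hab : a ≤ b) :
    ∃ g : α → β, Continuous g ∧ EqOn f g (Icc a b) :=
  ⟨IccExtend hab ((Icc a b).domRestrict f), hf.domRestrict.Icc_extend',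
    fun _ hx => (IccExtend_of_mem hab ((Icc a b).domRestrict f) hx).symm⟩

section Derivative

variable {𝕜 : Type*} [NontriviallyNormedField 𝕜]

theorem Matrix.hasDerivAt_mul {l m n : Type*} [Fintype l] [Fintype m] [Fintype n]
    {f : 𝕜 → Matrix l m 𝕜} {g : 𝕜 → Matrix m n 𝕜} {f' : Matrix l m 𝕜} {g' : Matrix m n 𝕜}
    {x : 𝕜} (hf : HasDerivAt f f' x) (hg : HasDerivAt g g' x) :
    HasDerivAt (fun t => f t * g t) (f' * g x + f x * g') x := by
  refine hasDerivAt_pi.2 fun i => hasDerivAt_pi.2 fun j => ?_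
  simp only [Matrix.mul_apply, Matrix.add_apply, ← Finset.sum_add_distrib]
  exact HasDerivAt.fun_sum fun k _ =>
    (hasDerivAt_pi.1 (hasDerivAt_pi.1 hf i) k).mul (hasDerivAt_pi.1 (hasDerivAt_pi.1 hg k) j)

theorem Matrix.hasDerivAt_pow_succ_of_commute {ι : Type*} [Fintype ι] [DecidableEq ι]
    {A : 𝕜 → Matrix ι ι 𝕜} {a : Matrix ι ι 𝕜} {x : 𝕜} (hA : HasDerivAt A a x)
    (h : Commute a (A x)) (m : ℕ) :
    HasDerivAt (fun t => A t ^ (m + 1)) (((m : 𝕜) + 1) • (a * A x ^ m)) x := by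
  induction m with
  | zero => simpa using hA
  | succ m ih =>
    convert Matrix.hasDerivAt_mul hA ih using 1
    · exact funext fun t => pow_succ' _ _
    · rw [mul_smul_comm, ← mul_assoc, ← h.eq, mul_assoc, ← pow_succ']
      push_cast
      module

end Derivative

section IntegralSeries

variable {ι : Type*} [Fintype ι] [DecidableEq ι]

theorem integral_mul_smul_pow_primitive {Y : ℝ → Matrix ι ι ℝ} (hY : Continuous Y) {x : ℝ}
    (hcomm : ∀ t ∈ uIcc 0 x, Commute (Y t) (∫ s in (0:ℝ)..t, Y s)) (k : ℕ) :
    ∫ t in (0:ℝ)..x, Y t * ((k ! : ℝ)⁻¹ • (∫ s in (0:ℝ)..t, Y s) ^ k) =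
      ((k + 1)! : ℝ)⁻¹ • (∫ s in (0:ℝ)..x, Y s) ^ (k + 1) := by
  set P : ℝ → Matrix ι ι ℝ := fun t => ∫ s in (0:ℝ)..t, Y s
  have hP : ∀ t, HasDerivAt P (Y t) t := fun t => (hY.integral_hasStrictDerivAt 0 t).hasDerivAt
  have hderiv : ∀ t ∈ uIcc 0 x, HasDerivAt (fun u => ((k + 1)! : ℝ)⁻¹ • P u ^ (k + 1))
      (Y t * ((k ! : ℝ)⁻¹ • P t ^ k)) t := by
    intro t ht
    refine ((Matrix.hasDerivAt_pow_succ_of_commute (hP t) (hcomm t ht) k).const_smul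
      ((k + 1)! : ℝ)⁻¹).congr_deriv ?_
    rw [smul_smul, mul_smul_comm, Nat.factorial_succ]
    push_cast
    field_simp
  have hPc : Continuous P := intervalIntegral.continuous_primitive (hY.intervalIntegrable ·) 0
  have hcont : Continuous fun t => Y t * ((k ! : ℝ)⁻¹ • P t ^ k) := by fun_prop
  rw [intervalIntegral.integral_eq_sub_of_hasDerivAt hderiv (hcont.intervalIntegrable 0 x)]
  simp [P]

theorem lterm_congr {X Y : ℝ → Matrix ι ι ℝ} {x : ℝ} (h : EqOn X Y (uIcc 0 x)) (k : ℕ) :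
    lterm X k x = lterm Y k x := by
  induction k generalizing x with
  | zero => rfl
  | succ k ih =>
    refine intervalIntegral.integral_congr fun t ht => ?_
    simp only [h ht, ih (h.mono (uIcc_subset_uIcc_left ht))]

theorem rterm_congr {X Y : ℝ → Matrix ι ι ℝ} {x : ℝ} (h : EqOn X Y (uIcc 0 x)) (k : ℕ) :
    rterm X k x = rterm Y k x := by
  induction k generalizing x with
  | zero => rfl
  | succ k ih =>
    refine intervalIntegral.integral_congr fun t ht => ?_
    simp only [h ht, ih (h.mono (uIcc_subset_uIcc_left ht))]

theorem lterm_eq_smul_pow {Y : ℝ → Matrix ι ι ℝ} (hY : Continuous Y) {x : ℝ}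
    (hcomm : ∀ t ∈ uIcc 0 x, Commute (Y t) (∫ s in (0:ℝ)..t, Y s)) (k : ℕ) :
    lterm Y k x = (k ! : ℝ)⁻¹ • (∫ s in (0:ℝ)..x, Y s) ^ k := by
  induction k generalizing x with
  | zero => simp [lterm]
  | succ k ih =>
    rw [← integral_mul_smul_pow_primitive hY hcomm]
    refine intervalIntegral.integral_congr fun t ht => ?_
    simp only [ih fun s hs => hcomm s (uIcc_subset_uIcc_left ht hs)]

theorem rterm_eq_smul_pow {Y : ℝ → Matrix ι ι ℝ} (hY : Continuous Y) {x : ℝ}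
    (hcomm : ∀ t ∈ uIcc 0 x, Commute (Y t) (∫ s in (0:ℝ)..t, Y s)) (k : ℕ) :
    rterm Y k x = (k ! : ℝ)⁻¹ • (∫ s in (0:ℝ)..x, Y s) ^ k := by
  induction k generalizing x with
  | zero => simp [rterm]
  | succ k ih =>
    rw [← integral_mul_smul_pow_primitive hY hcomm]
    refine intervalIntegral.integral_congr fun t ht => ?_
    simp only [ih fun s hs => hcomm s (uIcc_subset_uIcc_left ht hs)]
    exact (((hcomm t ht).pow_right k).smul_right _).eq.symm

end IntegralSeries

/-- when `X(x)` commutes with `∫_0^x X`, both integral series equal the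
matrix exponential of `∫_0^x X(t) dt`. -/
theorem ES_FS_eq_exp {n : ℕ} (b : ℝ) (X : ℝ → Matrix (Fin n) (Fin n) ℝ)
    (hX : ContinuousOn X (Set.Icc 0 b))
    (hcomm : ∀ x ∈ Set.Icc (0:ℝ) b, Commute (X x) (∫ t in (0:ℝ)..x, X t)) :
    ∀ x ∈ Set.Icc (0:ℝ) b,
      ES X x = NormedSpace.exp (∫ t in (0:ℝ)..x, X t) ∧
      FS X x = NormedSpace.exp (∫ t in (0:ℝ)..x, X t) := by
  intro x hx
  have hb : 0 ≤ b := hx.1.trans hx.2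
  obtain ⟨Y, hY, hXY⟩ := hX.exists_continuous_eqOn_Icc hb
  have hsub : ∀ {t}, t ∈ Icc 0 b → uIcc 0 t ⊆ Icc 0 b := uIcc_subset_Icc (left_mem_Icc.2 hb)
  have hint : ∀ t ∈ Icc 0 b, ∫ s in (0:ℝ)..t, X s = ∫ s in (0:ℝ)..t, Y s := fun t ht =>
    intervalIntegral.integral_congr (hXY.mono (hsub ht))
  have hcommY : ∀ t ∈ uIcc 0 x, Commute (Y t) (∫ s in (0:ℝ)..t, Y s) := fun t ht => by
    rw [← hXY (hsub hx ht), ← hint t (hsub hx ht)]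
    exact hcomm t (hsub hx ht)
  rw [ES, FS, NormedSpace.exp_eq_tsum ℝ, hint x hx]
  exact ⟨tsum_congr fun k => (lterm_congr (hXY.mono (hsub hx)) k).trans
      (lterm_eq_smul_pow hY hcommY k),
    tsum_congr fun k => (rterm_congr (hXY.mono (hsub hx)) k).trans
      (rterm_eq_smul_pow hY hcommY k)⟩
end

section
/- Let A : ℝ → Matrix (Fin n) (Fin n) ℝ and F : ℝ → Matrix (Fin n) (Fin 1) ℝ be continuous on [0, b]. If U : ℝ → Matrix (Fin n) (Fin 1) ℝ is differentiable and satisfies d/dx U(x) = A(x) · U(x) + F(x) on [0, b], then U(x) = ℰ(A)(x) · U(0) + ℰ(A)(x) · ∫_0^x ℱ(−A)(s) · F(s) ds for all x ∈ [0, b]; i.e. every solution of the linear system is of this form with constant matrix C = U(0). -/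
/-! The left series solves `E' = X·E`, `E(0) = 1`: termwise differentiation is justified by the
Picard estimate `‖E_k(x)‖ ≤ (c|x|)^k / k!`, and `ℱ(X) = ℰ(Xᵀ)ᵀ` gives `F' = F·X`, `F(0) = 1` for
the right series. Hence `ℱ(−A)·ℰ(A)` has derivative `−ℱ(−A)·A·ℰ(A) + ℱ(−A)·A·ℰ(A) = 0`, so it is
identically `1` and `ℱ(−A)(x)` inverts `ℰ(A)(x)`. For a solution `U`, the same cancellation gives
`(ℱ(−A)·U)' = ℱ(−A)·F`; integrating from `0` to `x` and multiplying by `ℰ(A)(x)` yields the formula.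
Since `A` is only continuous on `[0, b]`, it is first replaced by its extension that is constant
outside `[0, b]`; this changes neither series on `[0, b]`. -/

open MeasureTheory Matrix

/- Matrices are equipped with the elementwise sup norm. -/
attribute [local instance] Matrix.normedAddCommGroup Matrix.normedSpace

open Set
open scoped Interval

section MatrixCalculus

variable {ι κ ν : Type*} [Fintype ι] [Fintype κ] [Fintype ν]

theorem Matrix.norm_mul_le_card (A : Matrix ι κ ℝ) (B : Matrix κ ν ℝ) :
    ‖A * B‖ ≤ Fintype.card κ * ‖A‖ * ‖B‖ := by
  refine (Matrix.norm_le_iff (by positivity)).2 fun i j => ?_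
  calc ‖(A * B) i j‖ ≤ ∑ k, ‖A i k‖ * ‖B k j‖ := by
        simpa only [Matrix.mul_apply, norm_mul] using norm_sum_le Finset.univ fun k => A i k * B k j
    _ ≤ ∑ _k : κ, ‖A‖ * ‖B‖ := by
        gcongr <;> exact norm_entry_le_entrywise_sup_norm _
    _ = Fintype.card κ * ‖A‖ * ‖B‖ := by simp [mul_assoc]

theorem Matrix.norm_one_le_s11 [DecidableEq ι] : ‖(1 : Matrix ι ι ℝ)‖ ≤ 1 :=
  (Matrix.norm_le_iff zero_le_one).2 fun i j => by
    rw [Matrix.one_apply]; split_ifs <;> simp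

variable (ι κ ν) in
noncomputable def Matrix.mulCLM : Matrix ι κ ℝ →L[ℝ] Matrix κ ν ℝ →L[ℝ] Matrix ι ν ℝ :=
  LinearMap.mkContinuous₂
    (LinearMap.mk₂ ℝ (· * ·) Matrix.add_mul Matrix.smul_mul Matrix.mul_add
      fun c A B => Matrix.mul_smul A c B)
    (Fintype.card κ) Matrix.norm_mul_le_card

theorem HasDerivWithinAt.matrix_mul {f : ℝ → Matrix ι κ ℝ} {g : ℝ → Matrix κ ν ℝ}
    {f' : Matrix ι κ ℝ} {g' : Matrix κ ν ℝ} {s : Set ℝ} {x : ℝ}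
    (hf : HasDerivWithinAt f f' s x) (hg : HasDerivWithinAt g g' s x) :
    HasDerivWithinAt (fun t => f t * g t) (f' * g x + f x * g') s x := by
  rw [add_comm]
  exact (Matrix.mulCLM ι κ ν).hasDerivWithinAt_of_bilinear hf hg

theorem HasDerivAt.matrix_mul {f : ℝ → Matrix ι κ ℝ} {g : ℝ → Matrix κ ν ℝ}
    {f' : Matrix ι κ ℝ} {g' : Matrix κ ν ℝ} {x : ℝ}
    (hf : HasDerivAt f f' x) (hg : HasDerivAt g g' x) :
    HasDerivAt (fun t => f t * g t) (f' * g x + f x * g') x :=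
  hasDerivWithinAt_univ.mp (hf.hasDerivWithinAt.matrix_mul hg.hasDerivWithinAt)

variable (ι κ) in
noncomputable def Matrix.transposeₗᵢ : Matrix ι κ ℝ ≃ₗᵢ[ℝ] Matrix κ ι ℝ :=
  { Matrix.transposeLinearEquiv ι κ ℝ ℝ with norm_map' := Matrix.norm_transpose }

@[simp] theorem Matrix.transposeₗᵢ_apply (A : Matrix ι κ ℝ) :
    Matrix.transposeₗᵢ ι κ A = Aᵀ := rfl

theorem HasDerivAt.matrix_transpose {f : ℝ → Matrix ι κ ℝ} {f' : Matrix ι κ ℝ} {x : ℝ}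
    (hf : HasDerivAt f f' x) : HasDerivAt (fun t => (f t)ᵀ) f'ᵀ x :=
  (Matrix.transposeₗᵢ ι κ).toContinuousLinearEquiv.toContinuousLinearMap.hasFDerivAt
    |>.comp_hasDerivAt x hf

end MatrixCalculus

section IntegralSeries

variable {ι : Type*} [Fintype ι] [DecidableEq ι] {X : ℝ → Matrix ι ι ℝ}

theorem lterm_succ_zero (k : ℕ) : lterm X (k + 1) 0 = 0 := intervalIntegral.integral_same

theorem ES_zero : ES X 0 = 1 := by
  rw [ES, tsum_eq_single 0 fun k hk => ?_]
  · rfl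
  · obtain ⟨k, rfl⟩ := Nat.exists_eq_succ_of_ne_zero hk
    exact lterm_succ_zero k

theorem continuous_lterm (hX : Continuous X) (k : ℕ) : Continuous (lterm X k) := by
  induction k with
  | zero => exact continuous_const
  | succ k ih =>
    exact intervalIntegral.continuous_primitive
      (fun a b => (hX.matrix_mul ih).intervalIntegrable a b) 0

theorem hasDerivAt_lterm_succ (hX : Continuous X) (k : ℕ) (x : ℝ) :
    HasDerivAt (lterm X (k + 1)) (X x * lterm X k x) x :=
  ((hX.matrix_mul (continuous_lterm hX k)).integral_hasStrictDerivAt 0 x).hasDerivAt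

theorem norm_lterm_le_s11 {M R : ℝ} (hM : ∀ t ∈ Icc (-R) R, ‖X t‖ ≤ M) (k : ℕ) :
    ∀ x ∈ Icc (-R) R, ‖lterm X k x‖ ≤ (Fintype.card ι * M * |x|) ^ k / k.factorial := by
  induction k with
  | zero => intro x _; simpa [lterm] using Matrix.norm_one_le_s11
  | succ k ih =>
    intro x hx
    have hR : (0:ℝ) ∈ Icc (-R) R := by constructor <;> linarith [hx.1, hx.2]
    set c : ℝ := Fintype.card ι * M
    have hc : 0 ≤ c := mul_nonneg (Nat.cast_nonneg _) ((norm_nonneg _).trans (hM 0 hR))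
    have hbound : ∀ t ∈ Ι 0 x, ‖X t * lterm X k t‖ ≤ c * ((c * |t|) ^ k / k.factorial) := by
      intro t ht
      have htR : t ∈ Icc (-R) R := uIcc_subset_Icc hR hx (uIoc_subset_uIcc ht)
      calc ‖X t * lterm X k t‖ ≤ Fintype.card ι * ‖X t‖ * ‖lterm X k t‖ :=
            Matrix.norm_mul_le_card _ _
        _ ≤ c * ((c * |t|) ^ k / k.factorial) :=
            mul_le_mul (mul_le_mul_of_nonneg_left (hM t htR) (Nat.cast_nonneg _))
              (ih t htR) (norm_nonneg _) hc
    calc ‖lterm X (k + 1) x‖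
        ≤ |∫ t in (0:ℝ)..x, c * ((c * |t|) ^ k / k.factorial)| :=
          intervalIntegral.norm_integral_le_abs_of_norm_le
            (ae_restrict_of_forall_mem measurableSet_uIoc hbound)
            (Continuous.intervalIntegrable (by fun_prop) _ _)
      _ = |∫ t in Ι 0 x, c ^ (k + 1) / k.factorial * |t - 0| ^ k| := by
          rw [intervalIntegral.abs_intervalIntegral_eq]
          congr 2
          ext t
          rw [sub_zero]
          ring
      _ = (c * |x|) ^ (k + 1) / (k + 1).factorial := by
          rw [integral_const_mul, integral_pow_abs_sub_uIoc, sub_zero,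
            abs_of_nonneg (by positivity), Nat.factorial_succ]
          push_cast
          field_simp
          ring

theorem summable_lterm {M R : ℝ} (hM : ∀ t ∈ Icc (-R) R, ‖X t‖ ≤ M) {x : ℝ}
    (hx : x ∈ Icc (-R) R) : Summable fun k => lterm X k x :=
  .of_norm_bounded (Real.summable_pow_div_factorial _) fun k => norm_lterm_le_s11 hM k x hx

theorem hasDerivAt_ES (hX : Continuous X) (x : ℝ) : HasDerivAt (ES X) (X x * ES X x) x := by
  set R := |x| + 1
  obtain ⟨M, hM⟩ :=
    isCompact_Icc.exists_bound_of_continuousOn (hX.continuousOn (s := Icc (-R) R))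
  have hxR : x ∈ Ioo (-R) R := abs_lt.1 (lt_add_one _)
  have hM0 : 0 ≤ M := (norm_nonneg _).trans (hM x (Ioo_subset_Icc_self hxR))
  set c : ℝ := Fintype.card ι * M
  have hsum : ∀ y ∈ Ioo (-R) R, Summable fun k => lterm X k y :=
    fun y hy => summable_lterm hM (Ioo_subset_Icc_self hy)
  have hderiv :
      ∀ n, ∀ y ∈ Ioo (-R) R, ‖X y * lterm X n y‖ ≤ c * ((c * R) ^ n / n.factorial) := by
    intro n y hy
    have hyR : |y| ≤ R := (abs_lt.2 hy).le
    have hyR' : y ∈ Icc (-R) R := Ioo_subset_Icc_self hy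
    calc ‖X y * lterm X n y‖ ≤ Fintype.card ι * ‖X y‖ * ‖lterm X n y‖ :=
          Matrix.norm_mul_le_card _ _
      _ ≤ c * ((c * |y|) ^ n / n.factorial) :=
          mul_le_mul (mul_le_mul_of_nonneg_left (hM y hyR') (Nat.cast_nonneg _))
            (norm_lterm_le_s11 hM n y hyR') (norm_nonneg _) (by positivity)
      _ ≤ c * ((c * R) ^ n / n.factorial) := by gcongr
  have htail : HasDerivAt (fun y => 1 + ∑' k, lterm X (k + 1) y) (X x * ES X x) x := by
    have h := (hasDerivAt_tsum_of_isPreconnected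
      ((Real.summable_pow_div_factorial (c * R)).mul_left c) isOpen_Ioo isPreconnected_Ioo
      (fun n y _ => hasDerivAt_lterm_succ hX n y) hderiv hxR
      ((summable_nat_add_iff 1).2 (hsum x hxR)) hxR).const_add 1
    exact h.congr_deriv ((hsum x hxR).tsum_mul_left _)
  refine htail.congr_of_eventuallyEq ?_
  filter_upwards [isOpen_Ioo.mem_nhds hxR] with y hy
  exact (hsum y hy).tsum_eq_zero_add

end IntegralSeries

section Transpose

variable {ι : Type*} [Fintype ι] [DecidableEq ι] {X : ℝ → Matrix ι ι ℝ}

theorem rterm_eq_transpose_lterm (X : ℝ → Matrix ι ι ℝ) (k : ℕ) (x : ℝ) :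
    rterm X k x = (lterm (fun t => (X t)ᵀ) k x)ᵀ := by
  induction k generalizing x with
  | zero => exact Matrix.transpose_one.symm
  | succ k ih =>
    have h : ∀ t, rterm X k t * X t =
        Matrix.transposeₗᵢ ι ι ((X t)ᵀ * lterm (fun s => (X s)ᵀ) k t) := fun t => by
      rw [Matrix.transposeₗᵢ_apply, Matrix.transpose_mul, Matrix.transpose_transpose, ih]
    exact (intervalIntegral.integral_congr fun t _ => h t).trans
      ((Matrix.transposeₗᵢ ι ι).toLinearIsometry.intervalIntegral_comp_comm _)

theorem FS_eq_transpose_ES (X : ℝ → Matrix ι ι ℝ) (x : ℝ) :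
    FS X x = (ES (fun t => (X t)ᵀ) x)ᵀ := by
  rw [FS, tsum_congr fun k => rterm_eq_transpose_lterm X k x]
  exact ((Matrix.transposeₗᵢ ι ι).toContinuousLinearEquiv.map_tsum).symm

theorem FS_zero : FS X 0 = 1 := by
  rw [FS_eq_transpose_ES, ES_zero, Matrix.transpose_one]

theorem hasDerivAt_FS (hX : Continuous X) (x : ℝ) : HasDerivAt (FS X) (FS X x * X x) x := by
  have h := (hasDerivAt_ES (X := fun t => (X t)ᵀ) hX.matrix_transpose x).matrix_transpose
  rw [Matrix.transpose_mul, Matrix.transpose_transpose, ← FS_eq_transpose_ES] at h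
  exact h.congr_of_eventuallyEq (.of_forall fun y => FS_eq_transpose_ES X y)

end Transpose

section Congr

variable {ι : Type*} [Fintype ι] [DecidableEq ι] {X Y : ℝ → Matrix ι ι ℝ} {b : ℝ}

theorem lterm_eqOn (h : EqOn X Y (Icc 0 b)) (k : ℕ) :
    EqOn (lterm X k) (lterm Y k) (Icc 0 b) := by
  induction k with
  | zero => exact fun _ _ => rfl
  | succ k ih =>
    intro x hx
    refine intervalIntegral.integral_congr fun t ht => ?_
    have htb : t ∈ Icc 0 b := Icc_subset_Icc_right hx.2 (uIcc_of_le hx.1 ▸ ht)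
    rw [h htb, ih htb]

theorem ES_eqOn (h : EqOn X Y (Icc 0 b)) : EqOn (ES X) (ES Y) (Icc 0 b) :=
  fun _ hx => tsum_congr fun k => lterm_eqOn h k hx

theorem FS_eqOn (h : EqOn X Y (Icc 0 b)) : EqOn (FS X) (FS Y) (Icc 0 b) := fun x hx => by
  rw [FS_eq_transpose_ES, FS_eq_transpose_ES,
    ES_eqOn (fun t ht => congrArg Matrix.transpose (h ht)) hx]

end Congr

section LinearSystem

variable {ι ν : Type*} [Fintype ι] [DecidableEq ι] [Fintype ν] {X : ℝ → Matrix ι ι ℝ}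

theorem FS_neg_mul_ES (hX : Continuous X) (x : ℝ) : FS (fun t => -X t) x * ES X x = 1 := by
  have hW : ∀ y, HasDerivAt (fun z => FS (fun t => -X t) z * ES X z) 0 y := fun y => by
    have h := (hasDerivAt_FS (X := fun t => -X t) hX.neg y).matrix_mul (hasDerivAt_ES hX y)
    rwa [Matrix.mul_neg, Matrix.neg_mul, Matrix.mul_assoc, neg_add_cancel] at h
  have h :=
    is_const_of_deriv_eq_zero (fun y => (hW y).differentiableAt) (fun y => (hW y).deriv) x 0
  rwa [FS_zero, ES_zero, Matrix.one_mul] at h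

theorem ES_mul_FS_neg (hX : Continuous X) (x : ℝ) : ES X x * FS (fun t => -X t) x = 1 :=
  mul_eq_one_comm.1 (FS_neg_mul_ES hX x)

theorem eq_ES_mul_add_ES_mul_integral {b : ℝ} (hX : Continuous X) {F U : ℝ → Matrix ι ν ℝ}
    (hF : ContinuousOn F (Icc 0 b))
    (hU : ∀ x ∈ Icc 0 b, HasDerivWithinAt U (X x * U x + F x) (Icc 0 b) x) {x : ℝ}
    (hx : x ∈ Icc 0 b) :
    U x = ES X x * U 0 + ES X x * ∫ s in (0:ℝ)..x, FS (fun t => -X t) s * F s := by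
  set G := FS fun t => -X t
  have hG : ∀ y, HasDerivAt G (G y * -X y) y := hasDerivAt_FS (X := fun t => -X t) hX.neg
  have hV : ∀ y ∈ Icc 0 b, HasDerivWithinAt (fun t => G t * U t) (G y * F y) (Icc 0 b) y := by
    intro y hy
    have h := (hG y).hasDerivWithinAt.matrix_mul (hU y hy)
    rwa [Matrix.mul_add, Matrix.mul_neg, Matrix.neg_mul, Matrix.mul_assoc,
      neg_add_cancel_left] at h
  have hIcc : Icc 0 x ⊆ Icc 0 b := Icc_subset_Icc_right hx.2
  have hGF : ContinuousOn (fun s => G s * F s) (Icc 0 b) :=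
    (continuous_fst.matrix_mul continuous_snd).comp_continuousOn
      ((continuous_iff_continuousAt.2 fun y => (hG y).continuousAt).continuousOn.prodMk hF)
  have hFTC : ∫ s in (0:ℝ)..x, G s * F s = G x * U x - G 0 * U 0 :=
    intervalIntegral.integral_eq_sub_of_hasDerivAt_of_le hx.1
      (fun y hy => (hV y (hIcc hy)).continuousWithinAt.mono hIcc)
      (fun y hy => (hV y (hIcc (Ioo_subset_Icc_self hy))).hasDerivAt
        (Icc_mem_nhds hy.1 (hy.2.trans_le hx.2)))
      ((hGF.mono hIcc).intervalIntegrable_of_Icc hx.1)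
  calc U x = ES X x * (G x * U x) := by
        rw [← Matrix.mul_assoc, ES_mul_FS_neg hX, Matrix.one_mul]
    _ = ES X x * U 0 + ES X x * ∫ s in (0:ℝ)..x, G s * F s := by
      rw [hFTC, show G 0 = 1 from FS_zero, Matrix.one_mul, ← Matrix.mul_add, add_sub_cancel]

end LinearSystem

/-- every solution of `U' = A·U + F` on `[0,b]` has the form
`ℰ(A)·U(0) + ℰ(A)·∫_0^x ℱ(−A)(s)·F(s) ds`. -/
theorem linear_ODE_general_solution {n : ℕ} (b : ℝ)
    (A : ℝ → Matrix (Fin n) (Fin n) ℝ) (F : ℝ → Matrix (Fin n) (Fin 1) ℝ)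
    (hA : ContinuousOn A (Set.Icc 0 b)) (hF : ContinuousOn F (Set.Icc 0 b))
    (U : ℝ → Matrix (Fin n) (Fin 1) ℝ)
    (hU : ∀ x ∈ Set.Icc (0:ℝ) b,
      HasDerivWithinAt U (A x * U x + F x) (Set.Icc 0 b) x) :
    ∀ x ∈ Set.Icc (0:ℝ) b,
      U x = ES A x * U 0 + ES A x * ∫ s in (0:ℝ)..x, FS (fun t => -A t) s * F s := by
  intro x hx
  have hb : 0 ≤ b := hx.1.trans hx.2
  set A' := IccExtend hb ((Icc 0 b).domRestrict A)
  have hA' : Continuous A' := continuous_IccExtend_iff.2 hA.domRestrict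
  have hA'A : EqOn A' A (Icc 0 b) := fun t ht => IccExtend_of_mem hb _ ht
  have hsol := eq_ES_mul_add_ES_mul_integral hA' hF (U := U)
    (fun y hy => by rw [hA'A hy]; exact hU y hy) hx
  have hFS : EqOn (FS fun t => -A' t) (FS fun t => -A t) (Icc 0 b) :=
    FS_eqOn fun t ht => congrArg Neg.neg (hA'A ht)
  rwa [ES_eqOn hA'A hx, intervalIntegral.integral_congr fun s hs => congrArg (· * F s)
    (hFS (Icc_subset_Icc_right hx.2 (uIcc_of_le hx.1 ▸ hs)))] at hsol
end

section
/- Let A : ℝ → Matrix (Fin n) (Fin n) ℝ, B : ℝ → Matrix (Fin m) (Fin m) ℝ, P : ℝ → Matrix (Fin m) (Fin n) ℝ be continuous on [0, b]. If W : ℝ → Matrix (Fin n) (Fin m) ℝ is differentiable and bounded on [0, b], satisfies d/dx W(x) + W(x)·P(x)·W(x) + W(x)·B(x) − A(x)·W(x) = 0 on [0, b], and W(0) = 0, then W(x) = 0 for all x ∈ [0, b]. -/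
open MeasureTheory Matrix

/- Matrices are equipped with the elementwise sup norm. -/
attribute [local instance] Matrix.normedAddCommGroup Matrix.normedSpace

/-!
On `[0, b]` the solution `W` is bounded, so the quadratic term `W·P·W` is controlled by a constant
times `‖W‖`; together with the bounds of the continuous coefficients this gives
`‖W'‖ ≤ C ‖W‖`, and Grönwall's inequality with `W 0 = 0` forces `W = 0`.
-/

namespace Matrix

variable {l m n α : Type*} [Fintype l] [Fintype m] [Fintype n] [NonUnitalNormedRing α]

theorem norm_mul_le_card_mul_s16 (X : Matrix l m α) (Y : Matrix m n α) :
    ‖X * Y‖ ≤ Fintype.card m * ‖X‖ * ‖Y‖ := by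
  refine (norm_le_iff (by positivity)).2 fun i j => ?_
  calc ‖∑ k, X i k * Y k j‖ ≤ ∑ k, ‖X i k‖ * ‖Y k j‖ :=
        (norm_sum_le _ _).trans (Finset.sum_le_sum fun k _ => norm_mul_le _ _)
    _ ≤ ∑ _k : m, ‖X‖ * ‖Y‖ := by
        gcongr with k
        · exact norm_entry_le_entrywise_sup_norm X
        · exact norm_entry_le_entrywise_sup_norm Y
    _ = Fintype.card m * ‖X‖ * ‖Y‖ := by simp [mul_assoc]

theorem norm_riccati_le (A : Matrix n n α) (W : Matrix n m α) (P : Matrix m n α)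
    (B : Matrix m m α) :
    ‖A * W - W * P * W - W * B‖ ≤
      (Fintype.card n * ‖A‖ + Fintype.card n * Fintype.card m * ‖W‖ * ‖P‖
        + Fintype.card m * ‖B‖) * ‖W‖ := by
  have hA := norm_mul_le_card_mul_s16 A W
  have hB := norm_mul_le_card_mul_s16 W B
  have hWPW : ‖W * P * W‖ ≤ Fintype.card n * (Fintype.card m * ‖W‖ * ‖P‖) * ‖W‖ :=
    (norm_mul_le_card_mul_s16 (W * P) W).trans (by gcongr; exact norm_mul_le_card_mul_s16 W P)
  calc ‖A * W - W * P * W - W * B‖ ≤ ‖A * W‖ + ‖W * P * W‖ + ‖W * B‖ :=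
        (norm_sub_le _ _).trans (by gcongr; exact norm_sub_le _ _)
    _ ≤ _ := by linarith

end Matrix

theorem HasDerivWithinAt.Ici_of_Icc {E : Type*} [NormedAddCommGroup E] [NormedSpace ℝ E]
    {f : ℝ → E} {f' : E} {a b x : ℝ} (h : HasDerivWithinAt f f' (Set.Icc a b) x)
    (hx : x ∈ Set.Ico a b) : HasDerivWithinAt f f' (Set.Ici x) x :=
  h.mono_of_mem_nhdsWithin <| Filter.mem_of_superset
    (Icc_mem_nhdsGE_of_mem ⟨le_rfl, hx.2⟩) (Set.Icc_subset_Icc_left hx.1)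

/-- a bounded solution of the homogeneous Riccati equation
`W' + W·P·W + W·B − A·W = 0` with `W 0 = 0` vanishes identically on `[0,b]`. -/
theorem riccati_homogeneous_zero {n m : ℕ} (b : ℝ)
    (A : ℝ → Matrix (Fin n) (Fin n) ℝ) (B : ℝ → Matrix (Fin m) (Fin m) ℝ)
    (P : ℝ → Matrix (Fin m) (Fin n) ℝ)
    (hA : ContinuousOn A (Set.Icc 0 b)) (hB : ContinuousOn B (Set.Icc 0 b))
    (hP : ContinuousOn P (Set.Icc 0 b))
    (W W' : ℝ → Matrix (Fin n) (Fin m) ℝ)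
    (hW : ∀ x ∈ Set.Icc (0:ℝ) b, HasDerivWithinAt W (W' x) (Set.Icc 0 b) x)
    (hbdd : ∃ K, ∀ x ∈ Set.Icc (0:ℝ) b, ‖W x‖ ≤ K)
    (heq : ∀ x ∈ Set.Icc (0:ℝ) b,
      W' x + W x * P x * W x + W x * B x - A x * W x = 0)
    (hW0 : W 0 = 0) :
    ∀ x ∈ Set.Icc (0:ℝ) b, W x = 0 := by
  obtain ⟨K, hK⟩ := hbdd
  obtain ⟨MA, hMA⟩ := isCompact_Icc.exists_bound_of_continuousOn hA
  obtain ⟨MB, hMB⟩ := isCompact_Icc.exists_bound_of_continuousOn hB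
  obtain ⟨MP, hMP⟩ := isCompact_Icc.exists_bound_of_continuousOn hP
  refine eq_zero_of_abs_deriv_le_mul_abs_self_of_eq_zero_right
    (K := n * MA + n * m * K * MP + m * MB) (fun x hx => (hW x hx).continuousWithinAt)
    (fun x hx => (hW x (Set.Ico_subset_Icc_self hx)).Ici_of_Icc hx) hW0 fun x hx => ?_
  have hx := Set.Ico_subset_Icc_self hx
  have hW' : W' x = A x * W x - W x * P x * W x - W x * B x := by
    rw [← sub_eq_zero, ← heq x hx]; abel
  have hK0 : 0 ≤ K := (norm_nonneg _).trans (hK x hx)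
  rw [hW']
  refine (norm_riccati_le _ _ _ _).trans ?_
  simp only [Fintype.card_fin]
  gcongr
  exacts [hMA x hx, hK x hx, hMP x hx, hMB x hx]
end

section
/- (Uniqueness for the matrix Riccati equation) Let A : ℝ → Matrix (Fin n) (Fin n) ℝ, B : ℝ → Matrix (Fin m) (Fin m) ℝ, P : ℝ → Matrix (Fin m) (Fin n) ℝ, Q : ℝ → Matrix (Fin n) (Fin m) ℝ be continuous on [0, b]. If X, Y : ℝ → Matrix (Fin n) (Fin m) ℝ are both differentiable and bounded on [0, b], both satisfy d/dx W(x) + W(x)·P(x)·W(x) + W(x)·B(x) − A(x)·W(x) − Q(x) = 0 on [0, b], and X(0) = Y(0), then X(x) = Y(x) for all x ∈ [0, b]. -/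
open MeasureTheory Matrix

/- Matrices are equipped with the elementwise sup norm. -/
attribute [local instance] Matrix.normedAddCommGroup Matrix.normedSpace

/-! The Riccati field is quadratic in the unknown, hence Lipschitz on bounded sets, with a
constant controlled by bounds on the coefficients (continuous on a compact interval). Both
solutions are bounded, so they stay in a common closed ball, where the Grönwall-based uniqueness
theorem for ODEs applies. -/

theorem Matrix.norm_mul_le_card_mul_s17 {R α β γ : Type*} [NormedRing R]
    [Fintype α] [Fintype β] [Fintype γ] (M : Matrix α β R) (N : Matrix β γ R) :
    ‖M * N‖ ≤ Fintype.card β * ‖M‖ * ‖N‖ := by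
  rw [Matrix.norm_le_iff (by positivity)]
  intro i j
  calc ‖(M * N) i j‖ ≤ ∑ k, ‖M i k‖ * ‖N k j‖ :=
        (norm_sum_le _ _).trans (Finset.sum_le_sum fun k _ => norm_mul_le _ _)
    _ ≤ ∑ _k : β, ‖M‖ * ‖N‖ := by
        gcongr <;> exact Matrix.norm_entry_le_entrywise_sup_norm _
    _ = Fintype.card β * ‖M‖ * ‖N‖ := by
        rw [Finset.sum_const, Finset.card_univ, nsmul_eq_mul, mul_assoc]

section Riccati

variable {ι κ : Type*} [Fintype ι] [Fintype κ]
  (A : Matrix ι ι ℝ) (B : Matrix κ κ ℝ) (P : Matrix κ ι ℝ) (Q : Matrix ι κ ℝ)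

def riccatiField (W : Matrix ι κ ℝ) : Matrix ι κ ℝ :=
  A * W + Q - W * P * W - W * B

theorem eq_riccatiField_of_add_sub_eq_zero {W W' : Matrix ι κ ℝ}
    (h : W' + W * P * W + W * B - A * W - Q = 0) : W' = riccatiField A B P Q W := by
  rw [riccatiField, ← sub_eq_zero, ← h]
  abel

theorem riccatiField_sub_riccatiField (X Y : Matrix ι κ ℝ) :
    riccatiField A B P Q X - riccatiField A B P Q Y =
      A * (X - Y) - (X - Y) * B - X * (P * (X - Y)) - (X - Y) * (P * Y) := by
  simp only [riccatiField, Matrix.mul_sub, Matrix.sub_mul, ← Matrix.mul_assoc]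
  abel

theorem norm_riccatiField_sub_le {a β p R : ℝ} (ha : ‖A‖ ≤ a) (hβ : ‖B‖ ≤ β) (hp : ‖P‖ ≤ p)
    {X Y : Matrix ι κ ℝ} (hX : ‖X‖ ≤ R) (hY : ‖Y‖ ≤ R) :
    ‖riccatiField A B P Q X - riccatiField A B P Q Y‖ ≤
      (Fintype.card ι * a + Fintype.card κ * β + 2 * Fintype.card κ * Fintype.card ι * p * R) *
        ‖X - Y‖ := by
  set Z := X - Y
  have hZ : 0 ≤ ‖Z‖ := norm_nonneg _
  have hp₀ : 0 ≤ p := (norm_nonneg _).trans hp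
  have hR₀ : 0 ≤ R := (norm_nonneg _).trans hX
  have hPZ : ‖P * Z‖ ≤ Fintype.card ι * p * ‖Z‖ :=
    (norm_mul_le_card_mul_s17 P Z).trans (by gcongr)
  have hPY : ‖P * Y‖ ≤ Fintype.card ι * p * R :=
    (norm_mul_le_card_mul_s17 P Y).trans (by gcongr)
  rw [riccatiField_sub_riccatiField]
  calc _ ≤ ‖A * Z‖ + ‖Z * B‖ + ‖X * (P * Z)‖ + ‖Z * (P * Y)‖ := by
        refine (norm_sub_le _ _).trans (add_le_add_left ((norm_sub_le _ _).trans ?_) _)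
        exact add_le_add_left (norm_sub_le _ _) _
    _ ≤ Fintype.card ι * ‖A‖ * ‖Z‖ + Fintype.card κ * ‖Z‖ * ‖B‖ +
          Fintype.card κ * ‖X‖ * ‖P * Z‖ + Fintype.card κ * ‖Z‖ * ‖P * Y‖ := by
        gcongr <;> exact norm_mul_le_card_mul_s17 _ _
    _ ≤ Fintype.card ι * a * ‖Z‖ + Fintype.card κ * ‖Z‖ * β +
          Fintype.card κ * R * (Fintype.card ι * p * ‖Z‖) +
          Fintype.card κ * ‖Z‖ * (Fintype.card ι * p * R) := by
        gcongr
    _ = _ := by ring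

theorem lipschitzOnWith_riccatiField {a β p R : ℝ} (ha : ‖A‖ ≤ a) (hβ : ‖B‖ ≤ β) (hp : ‖P‖ ≤ p) :
    LipschitzOnWith
      (Fintype.card ι * a + Fintype.card κ * β + 2 * Fintype.card κ * Fintype.card ι * p * R).toNNReal
      (riccatiField A B P Q) (Metric.closedBall 0 R) :=
  LipschitzOnWith.of_dist_le' fun X hX Y hY => by
    simpa only [dist_eq_norm] using norm_riccatiField_sub_le A B P Q ha hβ hp
      (mem_closedBall_zero_iff.1 hX) (mem_closedBall_zero_iff.1 hY)

end Riccati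

theorem riccati_uniqueness_general {n m : ℕ} (b : ℝ)
    (A : ℝ → Matrix (Fin n) (Fin n) ℝ) (B : ℝ → Matrix (Fin m) (Fin m) ℝ)
    (P : ℝ → Matrix (Fin m) (Fin n) ℝ) (Q : ℝ → Matrix (Fin n) (Fin m) ℝ)
    (hA : ContinuousOn A (Set.Icc 0 b)) (hB : ContinuousOn B (Set.Icc 0 b))
    (hP : ContinuousOn P (Set.Icc 0 b))
    (X Y X' Y' : ℝ → Matrix (Fin n) (Fin m) ℝ)
    (hX : ∀ x ∈ Set.Icc (0:ℝ) b, HasDerivWithinAt X (X' x) (Set.Icc 0 b) x)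
    (hY : ∀ x ∈ Set.Icc (0:ℝ) b, HasDerivWithinAt Y (Y' x) (Set.Icc 0 b) x)
    (hXbdd : ∃ K, ∀ x ∈ Set.Icc (0:ℝ) b, ‖X x‖ ≤ K)
    (hYbdd : ∃ K, ∀ x ∈ Set.Icc (0:ℝ) b, ‖Y x‖ ≤ K)
    (hXeq : ∀ x ∈ Set.Icc (0:ℝ) b,
      X' x + X x * P x * X x + X x * B x - A x * X x - Q x = 0)
    (hYeq : ∀ x ∈ Set.Icc (0:ℝ) b,
      Y' x + Y x * P x * Y x + Y x * B x - A x * Y x - Q x = 0)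
    (h0 : X 0 = Y 0) :
    ∀ x ∈ Set.Icc (0:ℝ) b, X x = Y x := by
  obtain ⟨a, ha⟩ := isCompact_Icc.exists_bound_of_continuousOn hA
  obtain ⟨β, hβ⟩ := isCompact_Icc.exists_bound_of_continuousOn hB
  obtain ⟨p, hp⟩ := isCompact_Icc.exists_bound_of_continuousOn hP
  obtain ⟨KX, hKX⟩ := hXbdd
  obtain ⟨KY, hKY⟩ := hYbdd
  set R := max KX KY
  have lipschitz : ∀ t ∈ Set.Ico 0 b,
      LipschitzOnWith _ (riccatiField (A t) (B t) (P t) (Q t)) (Metric.closedBall 0 R) :=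
    fun t ht => have ht := Set.Ico_subset_Icc_self ht
      lipschitzOnWith_riccatiField _ _ _ _ (ha t ht) (hβ t ht) (hp t ht)
  have solves (W W' : ℝ → Matrix (Fin n) (Fin m) ℝ)
      (hW : ∀ x ∈ Set.Icc (0:ℝ) b, HasDerivWithinAt W (W' x) (Set.Icc 0 b) x)
      (hWeq : ∀ x ∈ Set.Icc (0:ℝ) b,
        W' x + W x * P x * W x + W x * B x - A x * W x - Q x = 0) :
      ∀ t ∈ Set.Ico 0 b,
        HasDerivWithinAt W (riccatiField (A t) (B t) (P t) (Q t) (W t)) (Set.Ici t) t := by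
    intro t ht
    rw [← eq_riccatiField_of_add_sub_eq_zero _ _ _ _ (hWeq t (Set.Ico_subset_Icc_self ht))]
    exact (hW t (Set.Ico_subset_Icc_self ht)).mono_of_mem_nhdsWithin (Icc_mem_nhdsGE_of_mem ht)
  have inBall {W : ℝ → Matrix (Fin n) (Fin m) ℝ} {K : ℝ} (hK : K ≤ R)
      (hWK : ∀ x ∈ Set.Icc (0:ℝ) b, ‖W x‖ ≤ K) (t : ℝ) (ht : t ∈ Set.Ico 0 b) :
      W t ∈ Metric.closedBall 0 R :=
    mem_closedBall_zero_iff.2 ((hWK t (Set.Ico_subset_Icc_self ht)).trans hK)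
  exact ODE_solution_unique_of_mem_Icc_right lipschitz
    (fun x hx => (hX x hx).continuousWithinAt) (solves X X' hX hXeq) (inBall (le_max_left _ _) hKX)
    (fun x hx => (hY x hx).continuousWithinAt) (solves Y Y' hY hYeq) (inBall (le_max_right _ _) hKY)
    h0

/-- uniqueness for the matrix Riccati equation: two bounded differentiable
solutions with the same initial value agree on `[0,b]`. -/
theorem riccati_uniqueness {n m : ℕ} (b : ℝ)
    (A : ℝ → Matrix (Fin n) (Fin n) ℝ) (B : ℝ → Matrix (Fin m) (Fin m) ℝ)
    (P : ℝ → Matrix (Fin m) (Fin n) ℝ) (Q : ℝ → Matrix (Fin n) (Fin m) ℝ)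
    (hA : ContinuousOn A (Set.Icc 0 b)) (hB : ContinuousOn B (Set.Icc 0 b))
    (hP : ContinuousOn P (Set.Icc 0 b)) (hQ : ContinuousOn Q (Set.Icc 0 b))
    (X Y X' Y' : ℝ → Matrix (Fin n) (Fin m) ℝ)
    (hX : ∀ x ∈ Set.Icc (0:ℝ) b, HasDerivWithinAt X (X' x) (Set.Icc 0 b) x)
    (hY : ∀ x ∈ Set.Icc (0:ℝ) b, HasDerivWithinAt Y (Y' x) (Set.Icc 0 b) x)
    (hXbdd : ∃ K, ∀ x ∈ Set.Icc (0:ℝ) b, ‖X x‖ ≤ K)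
    (hYbdd : ∃ K, ∀ x ∈ Set.Icc (0:ℝ) b, ‖Y x‖ ≤ K)
    (hXeq : ∀ x ∈ Set.Icc (0:ℝ) b,
      X' x + X x * P x * X x + X x * B x - A x * X x - Q x = 0)
    (hYeq : ∀ x ∈ Set.Icc (0:ℝ) b,
      Y' x + Y x * P x * Y x + Y x * B x - A x * Y x - Q x = 0)
    (h0 : X 0 = Y 0) :
    ∀ x ∈ Set.Icc (0:ℝ) b, X x = Y x :=
  riccati_uniqueness_general b A B P Q hA hB hP X Y X' Y' hX hY hXbdd hYbdd hXeq hYeq h0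
end
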